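/- Along any solution (q(t),v(t)) of the Kepler equations on S³ lying in TS³ with 0 < q0(t) < 1, 𝐪(t) ≠ 0 and E < 0, the vectors α(t) = α(q(t),v(t)) and β(t) = β(q(t),v(t)) satisfy dα/dt = (√(−2E)/(q0|𝐪|))β and dβ/dt = −(√(−2E)/(q0|𝐪|))α. -/

import Mathlib

open Matrix Real

noncomputable section

/-- The spatial (last three) components of a vector in `ℝ⁴`. -/
def sp (q : Fin 4 → ℝ) : Fin 3 → ℝ := fun i => q i.succ

/-- The Euclidean norm on `ℝ³`, written via the dot product. -/
def nrm3 (x : Fin 3 → ℝ) : ℝ := Real.sqrt (x ⬝ᵥ x)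

/-- The first standard basis vector `e₀ = (1,0,0,0)` of `ℝ⁴`. -/
def e0 : Fin 4 → ℝ := fun i => if i = 0 then 1 else 0

/-- The (constraint set defining the) tangent bundle `TS³ ⊂ ℝ⁴ × ℝ⁴`. -/
def TS3 : Set ((Fin 4 → ℝ) × (Fin 4 → ℝ)) :=
  {p | p.1 ⬝ᵥ p.1 = 1 ∧ p.1 ⬝ᵥ p.2 = 0}

/-- Right hand side of the Kepler equations of motion on `S³`:
`v̇ = γ e₀/(1-q₀²)^{3/2} - (⟨v,v⟩ + γ q₀/(1-q₀²)^{3/2}) q`. -/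
def keplerRHS (γ : ℝ) (q v : Fin 4 → ℝ) : Fin 4 → ℝ :=
  (γ / (1 - q 0 ^ 2) ^ ((3 : ℝ) / 2)) • e0
    - (v ⬝ᵥ v + γ * q 0 / (1 - q 0 ^ 2) ^ ((3 : ℝ) / 2)) • q

/-- The Kepler Hamiltonian on `S³`: `H = ½⟨v,v⟩ - γ q₀ / (1-q₀²)^{1/2}`. -/
def Hham (γ : ℝ) (p : (Fin 4 → ℝ) × (Fin 4 → ℝ)) : ℝ :=
  (1 / 2) * (p.2 ⬝ᵥ p.2) - γ * p.1 0 / Real.sqrt (1 - p.1 0 ^ 2)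

/-- The angular momentum `𝛍 = 𝐪 × 𝐯`. -/
def mu (p : (Fin 4 → ℝ) × (Fin 4 → ℝ)) : Fin 3 → ℝ :=
  crossProduct (sp p.1) (sp p.2)

/-- The vector `𝛑 = q₀ 𝐯 - v₀ 𝐪`. -/
def pivec (p : (Fin 4 → ℝ) × (Fin 4 → ℝ)) : Fin 3 → ℝ :=
  p.1 0 • sp p.2 - p.2 0 • sp p.1

/-- The Runge–Lenz vector `𝐀 = 𝛑 × 𝛍 - γ 𝐪/|𝐪|`. -/
def rl (γ : ℝ) (p : (Fin 4 → ℝ) × (Fin 4 → ℝ)) : Fin 3 → ℝ :=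
  crossProduct (pivec p) (mu p) - (γ / nrm3 (sp p.1)) • sp p.1

/-- The energy-like integral `E = H - |𝛍|²/2`. -/
def Een (γ : ℝ) (p : (Fin 4 → ℝ) × (Fin 4 → ℝ)) : ℝ :=
  Hham γ p - (mu p ⬝ᵥ mu p) / 2

/-- `ν = γ / √(-2E)`. -/
def nuLS (γ : ℝ) (p : (Fin 4 → ℝ) × (Fin 4 → ℝ)) : ℝ :=
  γ / Real.sqrt (-2 * Een γ p)


/-- The vector `α` of the Ligon–Schaaf map for the Kepler problem on `S³`. -/
def alphaLS (γ : ℝ) (p : (Fin 4 → ℝ) × (Fin 4 → ℝ)) : Fin 4 → ℝ :=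
  Fin.cons ((sp p.1 ⬝ᵥ pivec p) / (nuLS γ p * p.1 0))
    ((nrm3 (sp p.1))⁻¹ • sp p.1 - ((sp p.1 ⬝ᵥ pivec p) / (γ * p.1 0)) • pivec p)

/-- The vector `β` of the Ligon–Schaaf map for the Kepler problem on `S³`. -/
def betaLS (γ : ℝ) (p : (Fin 4 → ℝ) × (Fin 4 → ℝ)) : Fin 4 → ℝ :=
  Fin.cons (nrm3 (sp p.1) / (γ * p.1 0) * (pivec p ⬝ᵥ pivec p) - 1)
    ((nrm3 (sp p.1) / (nuLS γ p * p.1 0)) • pivec p)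

/-- The phase `φ = (𝐪·𝛑)/(ν q₀) = α₀` of the Ligon–Schaaf map. -/
def phiLS (γ : ℝ) (p : (Fin 4 → ℝ) × (Fin 4 → ℝ)) : ℝ :=
  (sp p.1 ⬝ᵥ pivec p) / (nuLS γ p * p.1 0)

/-- The Ligon–Schaaf map `Φ` for the Kepler problem on `S³`. -/
def PhiLS (γ : ℝ) (p : (Fin 4 → ℝ) × (Fin 4 → ℝ)) : (Fin 4 → ℝ) × (Fin 4 → ℝ) :=
  (Real.sin (phiLS γ p) • alphaLS γ p + Real.cos (phiLS γ p) • betaLS γ p,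
   nuLS γ p • (-Real.cos (phiLS γ p) • alphaLS γ p + Real.sin (phiLS γ p) • betaLS γ p))

/-! Along the flow the angular momentum `𝛍 = 𝐪 × 𝐯` and the Hamiltonian are conserved, hence so
are `E` and `ν`, while `𝛑̇ = -(γ/|𝐪|³) 𝐪` and `|𝐪|˙ = -q₀v₀/|𝐪|`. Since `t` may be an endpoint of
the interval, no neighbourhood of `t` is known to lie in `TS³`: these rates are computed from the
definitions, and the constraints are used only at `t` itself, where `𝐪·𝛑 = -v₀`,
`|𝛑|² = q₀²|v|² + v₀²` and `E = |𝛑|²/2 - γq₀/|𝐪|`. Eliminating `𝐯 = (𝛑 + v₀𝐪)/q₀`, both sides of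
each equation become combinations of `𝐪` and `𝛑` whose coefficients agree by `q₀² + |𝐪|² = 1`
and `-2E = (γ/ν)²`. -/

section Calculus

variable {𝕜 : Type*} [NontriviallyNormedField 𝕜] {t : 𝕜}

theorem HasDerivAt.dotProduct {ι : Type*} [Fintype ι] {f g : 𝕜 → ι → 𝕜} {f' g' : ι → 𝕜}
    (hf : HasDerivAt f f' t) (hg : HasDerivAt g g' t) :
    HasDerivAt (fun s => f s ⬝ᵥ g s) (f' ⬝ᵥ g t + f t ⬝ᵥ g') t :=
  (HasDerivAt.fun_sum (u := Finset.univ) fun i _ =>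
    (hasDerivAt_pi.mp hf i).fun_mul (hasDerivAt_pi.mp hg i)).congr_deriv
    (by simp only [Finset.sum_add_distrib]; rfl)

theorem HasDerivAt.crossProduct {f g : 𝕜 → Fin 3 → 𝕜} {f' g' : Fin 3 → 𝕜}
    (hf : HasDerivAt f f' t) (hg : HasDerivAt g g' t) :
    HasDerivAt (fun s => f s ⨯₃ g s) (f' ⨯₃ g t + f t ⨯₃ g') t := by
  have hf := hasDerivAt_pi.mp hf
  have hg := hasDerivAt_pi.mp hg
  refine hasDerivAt_pi.mpr fun i => ?_
  match i with
  | 0 =>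
    refine (((hf 1).fun_mul (hg 2)).fun_sub ((hf 2).fun_mul (hg 1))).congr_deriv ?_
    simp [cross_apply]; ring
  | 1 =>
    refine (((hf 2).fun_mul (hg 0)).fun_sub ((hf 0).fun_mul (hg 2))).congr_deriv ?_
    simp [cross_apply]; ring
  | 2 =>
    refine (((hf 0).fun_mul (hg 1)).fun_sub ((hf 1).fun_mul (hg 0))).congr_deriv ?_
    simp [cross_apply]; ring

end Calculus

theorem Fin.smul_cons {α M : Type*} [SMul M α] {n : ℕ} (c : M) (y : α) (Y : Fin n → α) :
    c • (Fin.cons y Y : Fin (n + 1) → α) = Fin.cons (c • y) (c • Y) :=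
  Matrix.smul_cons c y Y

theorem hasDerivAt_div_sqrt_one_sub_sq {x : ℝ} (hx : x ^ 2 < 1) :
    HasDerivAt (fun y => y / √(1 - y ^ 2)) (1 / √(1 - x ^ 2) ^ 3) x := by
  have hpos : 0 < 1 - x ^ 2 := by linarith
  have hsqrt : √(1 - x ^ 2) ≠ 0 := (Real.sqrt_pos.mpr hpos).ne'
  have hsq : √(1 - x ^ 2) ^ 2 = 1 - x ^ 2 := Real.sq_sqrt hpos.le
  refine ((hasDerivAt_id' x).fun_div
    ((((hasDerivAt_id' x).fun_pow 2).const_sub 1).sqrt hpos.ne') hsqrt).congr_deriv ?_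
  norm_num
  field_simp
  linear_combination hsq

theorem HasDerivAt.sp {f : ℝ → Fin 4 → ℝ} {f' : Fin 4 → ℝ} {t : ℝ} (hf : HasDerivAt f f' t) :
    HasDerivAt (fun s => sp (f s)) (sp f') t :=
  hasDerivAt_pi.mpr fun i => hasDerivAt_pi.mp hf i.succ

theorem dotProduct_eq_mul_add_sp (x y : Fin 4 → ℝ) : x ⬝ᵥ y = x 0 * y 0 + sp x ⬝ᵥ sp y := by
  simp [dotProduct, sp, Fin.sum_univ_succ]

theorem e0_dotProduct (x : Fin 4 → ℝ) : e0 ⬝ᵥ x = x 0 := by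
  simp [e0, dotProduct]

theorem nrm3_sq (x : Fin 3 → ℝ) : nrm3 x ^ 2 = x ⬝ᵥ x :=
  Real.sq_sqrt (by simpa using dotProduct_self_star_nonneg x)

theorem nrm3_pos {x : Fin 3 → ℝ} (hx : x ≠ 0) : 0 < nrm3 x :=
  Real.sqrt_pos.mpr <| (by simpa using dotProduct_self_star_nonneg x : (0 : ℝ) ≤ x ⬝ᵥ x).lt_of_ne'
    (dotProduct_self_eq_zero.not.mpr hx)

theorem sp_snd_eq_smul_pivec_add {q v : Fin 4 → ℝ} (ha : q 0 ≠ 0) :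
    sp v = (q 0)⁻¹ • (pivec (q, v) + v 0 • sp q) := by
  simp [pivec, smul_smul, inv_mul_cancel₀ ha]

theorem sp_keplerRHS (γ : ℝ) (q v : Fin 4 → ℝ) :
    sp (keplerRHS γ q v) = -(v ⬝ᵥ v + γ * q 0 / (1 - q 0 ^ 2) ^ ((3 : ℝ) / 2)) • sp q := by
  ext i; simp [keplerRHS, sp, e0, Fin.succ_ne_zero]; ring

theorem keplerRHS_zero (γ : ℝ) (q v : Fin 4 → ℝ) :
    keplerRHS γ q v 0 = γ / (1 - q 0 ^ 2) ^ ((3 : ℝ) / 2)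
      - (v ⬝ᵥ v + γ * q 0 / (1 - q 0 ^ 2) ^ ((3 : ℝ) / 2)) * q 0 := by
  simp [keplerRHS, e0]

namespace TS3

variable {q v : Fin 4 → ℝ}

theorem sq_add_dotProduct (h : (q, v) ∈ TS3) : q 0 ^ 2 + sp q ⬝ᵥ sp q = 1 := by
  rw [sq, ← dotProduct_eq_mul_add_sp]; exact h.1

theorem one_sub_sq (h : (q, v) ∈ TS3) : 1 - q 0 ^ 2 = nrm3 (sp q) ^ 2 := by
  rw [nrm3_sq]; linarith [sq_add_dotProduct h]

theorem sqrt_one_sub_sq (h : (q, v) ∈ TS3) : √(1 - q 0 ^ 2) = nrm3 (sp q) := by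
  rw [one_sub_sq h]; exact Real.sqrt_sq (Real.sqrt_nonneg _)

theorem one_sub_sq_rpow (h : (q, v) ∈ TS3) : (1 - q 0 ^ 2) ^ ((3 : ℝ) / 2) = nrm3 (sp q) ^ 3 := by
  rw [Real.rpow_div_two_eq_sqrt _ (by rw [one_sub_sq h]; positivity), sqrt_one_sub_sq h]
  norm_cast

theorem sp_dotProduct_sp (h : (q, v) ∈ TS3) : sp q ⬝ᵥ sp v = -(q 0 * v 0) := by
  linarith [h.2, dotProduct_eq_mul_add_sp q v]

theorem sp_dotProduct_pivec (h : (q, v) ∈ TS3) : sp q ⬝ᵥ pivec (q, v) = -v 0 := by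
  simp only [pivec, dotProduct_sub, dotProduct_smul, smul_eq_mul, sp_dotProduct_sp h]
  linear_combination (-v 0) * sq_add_dotProduct h

theorem sp_snd_dotProduct_pivec (h : (q, v) ∈ TS3) :
    sp v ⬝ᵥ pivec (q, v) = q 0 * (v ⬝ᵥ v) := by
  simp only [pivec, dotProduct_sub, dotProduct_smul, smul_eq_mul, dotProduct_comm (sp v) (sp q),
    sp_dotProduct_sp h, dotProduct_eq_mul_add_sp v v]
  ring

theorem pivec_dotProduct_pivec (h : (q, v) ∈ TS3) :
    pivec (q, v) ⬝ᵥ pivec (q, v) = q 0 ^ 2 * (v ⬝ᵥ v) + v 0 ^ 2 := by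
  nth_rw 1 [pivec]
  simp only [sub_dotProduct, smul_dotProduct, smul_eq_mul, sp_dotProduct_pivec h,
    sp_snd_dotProduct_pivec h]
  ring

theorem Een_eq (γ : ℝ) (h : (q, v) ∈ TS3) :
    Een γ (q, v) = pivec (q, v) ⬝ᵥ pivec (q, v) / 2 - γ * q 0 / nrm3 (sp q) := by
  rw [Een, Hham, mu, cross_dot_cross, pivec_dotProduct_pivec h, dotProduct_comm (sp v) (sp q),
    sp_dotProduct_sp h, dotProduct_eq_mul_add_sp v v, sqrt_one_sub_sq h]
  linear_combination (-(sp v ⬝ᵥ sp v) / 2) * sq_add_dotProduct h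

theorem nrm3_mul_neg_two_Een (γ : ℝ) (h : (q, v) ∈ TS3) (hr : nrm3 (sp q) ≠ 0) :
    nrm3 (sp q) * (-2 * Een γ (q, v))
      = 2 * γ * q 0 - nrm3 (sp q) * (q 0 ^ 2 * (v ⬝ᵥ v) + v 0 ^ 2) := by
  rw [Een_eq γ h, pivec_dotProduct_pivec h]
  field_simp
  ring

end TS3

section Solution

variable {γ : ℝ} {q v : ℝ → Fin 4 → ℝ} {t : ℝ}

theorem hasDerivAt_pivec (hq : HasDerivAt q (v t) t)
    (hv : HasDerivAt v (keplerRHS γ (q t) (v t)) t) :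
    HasDerivAt (fun s => pivec (q s, v s))
      (-(γ / (1 - q t 0 ^ 2) ^ ((3 : ℝ) / 2)) • sp (q t)) t := by
  refine (((hasDerivAt_pi.mp hq 0).fun_smul hv.sp).fun_sub
    ((hasDerivAt_pi.mp hv 0).fun_smul hq.sp)).congr_deriv ?_
  rw [sp_keplerRHS, keplerRHS_zero]
  module

theorem hasDerivAt_nrm3_sp (hq : HasDerivAt q (v t) t) (hQ : sp (q t) ≠ 0) :
    HasDerivAt (fun s => nrm3 (sp (q s))) (sp (q t) ⬝ᵥ sp (v t) / nrm3 (sp (q t))) t := by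
  refine ((hq.sp.dotProduct hq.sp).sqrt (dotProduct_self_eq_zero.not.mpr hQ)).congr_deriv ?_
  rw [dotProduct_comm (sp (v t)), nrm3]
  ring

theorem hasDerivAt_mu (hq : HasDerivAt q (v t) t)
    (hv : HasDerivAt v (keplerRHS γ (q t) (v t)) t) :
    HasDerivAt (fun s => mu (q s, v s)) 0 t :=
  (hq.sp.crossProduct hv.sp).congr_deriv (by simp [sp_keplerRHS])

theorem hasDerivAt_Hham (hq : HasDerivAt q (v t) t)
    (hv : HasDerivAt v (keplerRHS γ (q t) (v t)) t) (hp : (q t, v t) ∈ TS3)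
    (hQ : sp (q t) ≠ 0) :
    HasDerivAt (fun s => Hham γ (q s, v s)) 0 t := by
  have hq0 : q t 0 ^ 2 < 1 := by
    have := TS3.one_sub_sq hp
    nlinarith [nrm3_pos hQ]
  have hqv : q t ⬝ᵥ v t = 0 := hp.2
  simp only [Hham, mul_div_assoc]
  have hK := ((hasDerivAt_div_sqrt_one_sub_sq hq0).comp t (hasDerivAt_pi.mp hq 0)).const_mul γ
  refine (((hv.dotProduct hv).const_mul (1 / 2)).sub hK).congr_deriv ?_
  rw [dotProduct_comm (v t), keplerRHS, sub_dotProduct, smul_dotProduct, smul_dotProduct,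
    e0_dotProduct, hqv, TS3.one_sub_sq_rpow hp, TS3.sqrt_one_sub_sq hp]
  simp only [smul_eq_mul]
  ring

theorem hasDerivAt_Een (hq : HasDerivAt q (v t) t)
    (hv : HasDerivAt v (keplerRHS γ (q t) (v t)) t) (hp : (q t, v t) ∈ TS3)
    (hQ : sp (q t) ≠ 0) :
    HasDerivAt (fun s => Een γ (q s, v s)) 0 t :=
  ((hasDerivAt_Hham hq hv hp hQ).sub
    (((hasDerivAt_mu hq hv).dotProduct (hasDerivAt_mu hq hv)).div_const 2)).congr_deriv (by simp)

theorem hasDerivAt_nuLS (hq : HasDerivAt q (v t) t)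
    (hv : HasDerivAt v (keplerRHS γ (q t) (v t)) t) (hp : (q t, v t) ∈ TS3)
    (hQ : sp (q t) ≠ 0) (hE : Een γ (q t, v t) < 0) :
    HasDerivAt (fun s => nuLS γ (q s, v s)) 0 t := by
  have hE' : -2 * Een γ (q t, v t) ≠ 0 := by linarith
  exact ((hasDerivAt_const t γ).div (((hasDerivAt_Een hq hv hp hQ).const_mul (-2)).sqrt hE')
    (Real.sqrt_ne_zero'.mpr (by linarith))).congr_deriv (by simp)

theorem hasDerivAt_sp_dotProduct_pivec (hq : HasDerivAt q (v t) t)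
    (hv : HasDerivAt v (keplerRHS γ (q t) (v t)) t) (hp : (q t, v t) ∈ TS3)
    (hQ : sp (q t) ≠ 0) :
    HasDerivAt (fun s => sp (q s) ⬝ᵥ pivec (q s, v s))
      (q t 0 * (v t ⬝ᵥ v t) - γ / nrm3 (sp (q t))) t := by
  refine (hq.sp.dotProduct (hasDerivAt_pivec hq hv)).congr_deriv ?_
  rw [TS3.sp_snd_dotProduct_pivec hp, dotProduct_smul, TS3.one_sub_sq_rpow hp, ← nrm3_sq,
    smul_eq_mul]
  field_simp [(nrm3_pos hQ).ne']
  ring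

theorem hasDerivAt_pivec_dotProduct_pivec (hq : HasDerivAt q (v t) t)
    (hv : HasDerivAt v (keplerRHS γ (q t) (v t)) t) (hp : (q t, v t) ∈ TS3) :
    HasDerivAt (fun s => pivec (q s, v s) ⬝ᵥ pivec (q s, v s))
      (2 * γ * v t 0 / nrm3 (sp (q t)) ^ 3) t := by
  refine ((hasDerivAt_pivec hq hv).dotProduct (hasDerivAt_pivec hq hv)).congr_deriv ?_
  rw [smul_dotProduct, dotProduct_smul, dotProduct_comm (pivec _), TS3.sp_dotProduct_pivec hp,
    TS3.one_sub_sq_rpow hp]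
  simp only [smul_eq_mul]
  ring

theorem hasDerivAt_alphaLS (hγ : γ ≠ 0) (hq : HasDerivAt q (v t) t)
    (hv : HasDerivAt v (keplerRHS γ (q t) (v t)) t) (hp : (q t, v t) ∈ TS3)
    (hQ : sp (q t) ≠ 0) (ha : q t 0 ≠ 0) (hE : Een γ (q t, v t) < 0) :
    HasDerivAt (fun s => alphaLS γ (q s, v s))
      ((√(-2 * Een γ (q t, v t)) / (q t 0 * nrm3 (sp (q t)))) • betaLS γ (q t, v t)) t := by
  have hs : √(-2 * Een γ (q t, v t)) ≠ 0 := Real.sqrt_ne_zero'.mpr (by linarith)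
  have hν : nuLS γ (q t, v t) ≠ 0 := div_ne_zero hγ hs
  have hr : nrm3 (sp (q t)) ≠ 0 := (nrm3_pos hQ).ne'
  have hq0 := hasDerivAt_pi.mp hq 0
  have hQP := hasDerivAt_sp_dotProduct_pivec hq hv hp hQ
  refine ((hQP.fun_div ((hasDerivAt_nuLS hq hv hp hQ hE).fun_mul hq0) (mul_ne_zero hν ha)).finCons
    ((((hasDerivAt_nrm3_sp hq hQ).fun_inv hr).fun_smul hq.sp).fun_sub
      ((hQP.fun_div (hq0.const_mul γ) (mul_ne_zero hγ ha)).fun_smul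
        (hasDerivAt_pivec hq hv)))).congr_deriv ?_
  have hrs := TS3.nrm3_mul_neg_two_Een γ hp hr
  rw [← Real.sq_sqrt (by linarith : 0 ≤ -2 * Een γ (q t, v t))] at hrs
  have hF := TS3.one_sub_sq hp
  rw [betaLS, Fin.smul_cons, Fin.cons_inj]
  dsimp only
  rw [TS3.one_sub_sq_rpow hp, TS3.sp_dotProduct_pivec hp, TS3.sp_dotProduct_sp hp,
    TS3.pivec_dotProduct_pivec hp, nuLS, sp_snd_eq_smul_pivec_add (v := v t) ha]
  set s := √(-2 * Een γ (q t, v t))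
  constructor
  · rw [smul_eq_mul]
    field_simp
    ring
  · match_scalars
    · field_simp
      linear_combination -hrs
    · field_simp
      linear_combination -(v t 0) * hF

theorem hasDerivAt_betaLS (hγ : γ ≠ 0) (hq : HasDerivAt q (v t) t)
    (hv : HasDerivAt v (keplerRHS γ (q t) (v t)) t) (hp : (q t, v t) ∈ TS3)
    (hQ : sp (q t) ≠ 0) (ha : q t 0 ≠ 0) (hE : Een γ (q t, v t) < 0) :
    HasDerivAt (fun s => betaLS γ (q s, v s))
      (-(√(-2 * Een γ (q t, v t)) / (q t 0 * nrm3 (sp (q t)))) • alphaLS γ (q t, v t)) t := by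
  have hs : √(-2 * Een γ (q t, v t)) ≠ 0 := Real.sqrt_ne_zero'.mpr (by linarith)
  have hν : nuLS γ (q t, v t) ≠ 0 := div_ne_zero hγ hs
  have hr : nrm3 (sp (q t)) ≠ 0 := (nrm3_pos hQ).ne'
  have hq0 := hasDerivAt_pi.mp hq 0
  have hrn := hasDerivAt_nrm3_sp hq hQ
  refine ((((hrn.fun_div (hq0.const_mul γ) (mul_ne_zero hγ ha)).fun_mul
      (hasDerivAt_pivec_dotProduct_pivec hq hv hp)).sub_const 1).finCons
    ((hrn.fun_div ((hasDerivAt_nuLS hq hv hp hQ hE).fun_mul hq0) (mul_ne_zero hν ha)).fun_smul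
      (hasDerivAt_pivec hq hv))).congr_deriv ?_
  have hrs := TS3.nrm3_mul_neg_two_Een γ hp hr
  rw [← Real.sq_sqrt (by linarith : 0 ≤ -2 * Een γ (q t, v t))] at hrs
  have hF := TS3.one_sub_sq hp
  rw [alphaLS, Fin.smul_cons, Fin.cons_inj]
  dsimp only
  rw [TS3.one_sub_sq_rpow hp, TS3.sp_dotProduct_pivec hp, TS3.sp_dotProduct_sp hp,
    TS3.pivec_dotProduct_pivec hp, nuLS]
  set s := √(-2 * Een γ (q t, v t))
  constructor
  · rw [smul_eq_mul]
    field_simp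
    linear_combination
      (v t 0 * nrm3 (sp (q t)) * (q t 0 ^ 2 * (v t ⬝ᵥ v t) + v t 0 ^ 2)) * hF - v t 0 * hrs
  · match_scalars
    · field_simp
    · field_simp
      linear_combination (v t 0 * γ) * hF

end Solution

theorem alpha_beta_derivatives_general (γ : ℝ) (hγ : 0 < γ) (I : Set ℝ)
    (q v : ℝ → Fin 4 → ℝ)
    (hq : ∀ t ∈ I, HasDerivAt q (v t) t)
    (hv : ∀ t ∈ I, HasDerivAt v (keplerRHS γ (q t) (v t)) t)
    (hTS : ∀ t ∈ I, (q t, v t) ∈ TS3)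
    (hq0 : ∀ t ∈ I, 0 < q t 0 ∧ q t 0 < 1)
    (hqnz : ∀ t ∈ I, sp (q t) ≠ 0)
    (hE : ∀ t ∈ I, Een γ (q t, v t) < 0) :
    ∀ t ∈ I,
      HasDerivAt (fun s => alphaLS γ (q s, v s))
        ((Real.sqrt (-2 * Een γ (q t, v t)) / (q t 0 * nrm3 (sp (q t)))) • betaLS γ (q t, v t)) t ∧
      HasDerivAt (fun s => betaLS γ (q s, v s))
        (-(Real.sqrt (-2 * Een γ (q t, v t)) / (q t 0 * nrm3 (sp (q t)))) • alphaLS γ (q t, v t)) t :=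
  fun t ht =>
    have ha := (hq0 t ht).1.ne'
    ⟨hasDerivAt_alphaLS hγ.ne' (hq t ht) (hv t ht) (hTS t ht) (hqnz t ht) ha (hE t ht),
      hasDerivAt_betaLS hγ.ne' (hq t ht) (hv t ht) (hTS t ht) (hqnz t ht) ha (hE t ht)⟩

theorem alpha_beta_derivatives (γ : ℝ) (hγ : 0 < γ) (I : Set ℝ) (hI : Convex ℝ I)
    (q v : ℝ → Fin 4 → ℝ)
    (hq : ∀ t ∈ I, HasDerivAt q (v t) t)
    (hv : ∀ t ∈ I, HasDerivAt v (keplerRHS γ (q t) (v t)) t)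
    (hTS : ∀ t ∈ I, (q t, v t) ∈ TS3)
    (hq0 : ∀ t ∈ I, 0 < q t 0 ∧ q t 0 < 1)
    (hqnz : ∀ t ∈ I, sp (q t) ≠ 0)
    (hE : ∀ t ∈ I, Een γ (q t, v t) < 0) :
    ∀ t ∈ I,
      HasDerivAt (fun s => alphaLS γ (q s, v s))
        ((Real.sqrt (-2 * Een γ (q t, v t)) / (q t 0 * nrm3 (sp (q t)))) • betaLS γ (q t, v t)) t ∧
      HasDerivAt (fun s => betaLS γ (q s, v s))
        (-(Real.sqrt (-2 * Een γ (q t, v t)) / (q t 0 * nrm3 (sp (q t)))) • alphaLS γ (q t, v t)) t :=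
  alpha_beta_derivatives_general γ hγ I q v hq hv hTS hq0 hqnz hE

end
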